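/- arXiv:1602.08903 — 8 statements merged into one kernel-verified Lean document; each statement's English description precedes it below -/
import Mathlib

section
/- Let AF = ⟨AR, attacks⟩ be a finite argumentation framework and M ⊆ L_{Π_AF}. Then M is a GL-supported model of Π_AF if and only if E_M = {x | def(x) ∈ L_{Π_AF} \ M} is a semi-stable extension of AF. -/
/- Argumentation framework notions over argument type `A` with attack relation `att`. -/
section AF
variable {A : Type*}

/-- `S⁺`: the set of arguments attacked by `S`. -/
def plusSet (att : A → A → Prop) (S : Set A) : Set A := {b | ∃ a ∈ S, att a b}

/-- The range of `S`: `S ∪ S⁺`. -/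
def rangeOf (att : A → A → Prop) (S : Set A) : Set A := S ∪ plusSet att S

def conflictFree (att : A → A → Prop) (S : Set A) : Prop :=
  ∀ a ∈ S, ∀ b ∈ S, ¬ att a b

def acceptable (att : A → A → Prop) (S : Set A) (a : A) : Prop :=
  ∀ b, att b a → ∃ c ∈ S, att c b

def admissible (att : A → A → Prop) (S : Set A) : Prop :=
  conflictFree att S ∧ ∀ a ∈ S, acceptable att S a

def completeExt (att : A → A → Prop) (S : Set A) : Prop :=
  admissible att S ∧ ∀ a, acceptable att S a → a ∈ S

def preferredExt (att : A → A → Prop) (S : Set A) : Prop :=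
  admissible att S ∧ ∀ T, admissible att T → S ⊆ T → T = S

def stableExt (att : A → A → Prop) (S : Set A) : Prop :=
  conflictFree att S ∧ ∀ b, b ∉ S → ∃ a ∈ S, att a b

def semiStableExt (att : A → A → Prop) (S : Set A) : Prop :=
  completeExt att S ∧ ∀ T, completeExt att T →
    rangeOf att S ⊆ rangeOf att T → rangeOf att T ⊆ rangeOf att S

def stageExt (att : A → A → Prop) (S : Set A) : Prop :=
  conflictFree att S ∧ ∀ T, conflictFree att T →
    rangeOf att S ⊆ rangeOf att T → rangeOf att T ⊆ rangeOf att S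

end AF

/- Normal logic programs. -/
section LP
variable {α : Type*}

structure Clause (α : Type*) where
  head : α
  pos : Set α
  neg : Set α

/-- `M` satisfies clause `C` read classically (`not` = classical negation). -/
def satClause (M : Set α) (C : Clause α) : Prop :=
  (C.pos ⊆ M ∧ C.neg ∩ M = ∅) → C.head ∈ M

/-- `M` is a 2-valued classical model of the program `P`. -/
def isModel (M : Set α) (P : Set (Clause α)) : Prop := ∀ C ∈ P, satClause M C

/-- Gelfond–Lifschitz reduct `P^M`. -/
def glReduct (P : Set (Clause α)) (M : Set α) : Set (Clause α) :=
  {C' | ∃ C ∈ P, C.neg ∩ M = ∅ ∧ C' = ⟨C.head, C.pos, ∅⟩}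

/-- The facts of a program. -/
def facts (P : Set (Clause α)) : Set α :=
  {a | ∃ C ∈ P, C.head = a ∧ C.pos = ∅ ∧ C.neg = ∅}

def supportedModel (M : Set α) (P : Set (Clause α)) : Prop :=
  isModel M P ∧ ∀ a ∈ M, ∃ C ∈ P, C.head = a ∧ C.pos ⊆ M ∧ C.neg ∩ M = ∅

/-- `M` is a stable model of `P`: a ⊆-minimal model of `P^M`. -/
def stableModel (M : Set α) (P : Set (Clause α)) : Prop :=
  isModel M (glReduct P M) ∧ ∀ N ⊆ M, isModel N (glReduct P M) → N = M

/-- The reduction `RED(P,M)`. -/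
def red (P : Set (Clause α)) (M : Set α) : Set (Clause α) :=
  {C' | ∃ C ∈ P, C' = ⟨C.head, C.pos, C.neg ∩ M⟩}

/-- `M` is a p-stable model of `P`. -/
def pStableModel (M : Set α) (P : Set (Clause α)) : Prop :=
  isModel M (red P M) ∧ ∀ a ∈ M, ∀ I : Set α, isModel I (red P M) → a ∈ I

/-- Atoms occurring in `P`. -/
def atomsOf (P : Set (Clause α)) : Set α :=
  ⋃ C ∈ P, ({C.head} ∪ C.pos ∪ C.neg)

end LP

/- The mappings `Π_AF⁻` and `Π_AF`; the atom `def(x)` is identified with `x`,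
so the signature `{def(x) | x ∈ AR}` is `Set.univ`. -/
section Maps
variable {A : Type*}

def piMinus (att : A → A → Prop) : Set (Clause A) :=
  {C | ∃ a b, att b a ∧ C = ⟨a, ∅, {b}⟩}

def piAF (att : A → A → Prop) : Set (Clause A) :=
  piMinus att ∪ {C | ∃ a b, att b a ∧ C = ⟨a, {c | att c b}, ∅⟩}

/-- `Facts(P^M) ∪ (L \ M)`, with `L = {def(x) | x ∈ AR} = Set.univ`. -/
def scSet (P : Set (Clause A)) (M : Set A) : Set A := facts (glReduct P M) ∪ Mᶜ

/-- GL-supported model of `Π_AF`. -/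
def glSupportedModel (att : A → A → Prop) (M : Set A) : Prop :=
  supportedModel M (piAF att) ∧ ∀ N, supportedModel N (piAF att) →
    scSet (piAF att) M ⊆ scSet (piAF att) N → scSet (piAF att) N ⊆ scSet (piAF att) M

/-- GL-stage model of `Π_AF⁻`. -/
def glStageModel (att : A → A → Prop) (M : Set A) : Prop :=
  isModel M (piMinus att) ∧ ∀ N, isModel N (piMinus att) →
    scSet (piMinus att) M ⊆ scSet (piMinus att) N → scSet (piMinus att) N ⊆ scSet (piMinus att) M

end Maps

section Aux
variable {A : Type*}

lemma r1 (att : A → A → Prop) (M : Set A) :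
    supportedModel M (piAF att) ↔ completeExt att Mᶜ := by
  constructor
  · rintro ⟨hM, hsup⟩
    have hcf : conflictFree att Mᶜ := by
      intro a ha b hb hab
      have hC : (⟨b, ∅, {a}⟩ : Clause A) ∈ piAF att :=
        Or.inl ⟨b, a, hab, rfl⟩
      have := hM _ hC ⟨by simp, by simpa [Set.singleton_inter_eq_empty] using ha⟩
      exact hb this
    have hacc : ∀ a ∈ Mᶜ, acceptable att Mᶜ a := by
      intro a ha b hba
      have hC : (⟨a, {c | att c b}, ∅⟩ : Clause A) ∈ piAF att :=
        Or.inr ⟨a, b, hba, rfl⟩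
      by_contra hno
      push_neg at hno
      have hpos : {c | att c b} ⊆ M := by
        intro c hc
        by_contra hcM
        exact (hno c hcM).elim hc
      exact ha (hM _ hC ⟨hpos, by simp⟩)
    refine ⟨⟨hcf, hacc⟩, ?_⟩
    intro a hA
    by_contra haM
    simp only [Set.mem_compl_iff, not_not] at haM
    obtain ⟨C, hC, hhead, hposs, hnegs⟩ := hsup a haM
    rcases hC with ⟨a', b, hba, rfl⟩ | ⟨a', b, hba, rfl⟩
    · simp only at hhead; subst hhead
      have hbE : b ∈ Mᶜ := by
        simpa [Set.singleton_inter_eq_empty] using hnegs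
      obtain ⟨c, hcE, hcb⟩ := hA b hba
      exact hcf c hcE b hbE hcb
    · simp only at hhead; subst hhead
      obtain ⟨c, hcE, hcb⟩ := hA b hba
      exact hcE (hposs hcb)
  · rintro ⟨⟨hcf, hacc⟩, hcomp⟩
    constructor
    · rintro C (⟨a, b, hba, rfl⟩ | ⟨a, b, hba, rfl⟩) ⟨hpos, hneg⟩
      · simp only
        by_contra haM
        have hbE : b ∈ Mᶜ := by
          simpa [Set.singleton_inter_eq_empty] using hneg
        exact hcf b hbE a haM hba
      · simp only
        by_contra haM
        obtain ⟨c, hcE, hcb⟩ := hacc a haM b hba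
        exact hcE (hpos hcb)
    · intro a haM
      have hnacc : ¬ acceptable att Mᶜ a := fun h => hcomp a h haM
      simp only [acceptable, not_forall] at hnacc
      obtain ⟨b, hba, hno⟩ := hnacc
      push_neg at hno
      refine ⟨⟨a, {c | att c b}, ∅⟩, Or.inr ⟨a, b, hba, rfl⟩, rfl, ?_, by simp⟩
      intro c hc
      by_contra hcM
      exact (hno c hcM) hc

lemma sc_eq (att : A → A → Prop) (M : Set A) (h : completeExt att Mᶜ) :
    scSet (piAF att) M = rangeOf att Mᶜ := by
  ext x
  simp only [scSet, rangeOf, Set.mem_union]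
  constructor
  · rintro (hx | hx)
    · right
      obtain ⟨C', hC', hhead, hpos, _⟩ := hx
      obtain ⟨C, hC, hneg, rfl⟩ := hC'
      rcases hC with ⟨a, b, hba, rfl⟩ | ⟨a, b, hba, rfl⟩
      · simp only at hhead hpos; subst hhead
        have hbE : b ∈ Mᶜ := by
          simpa [Set.singleton_inter_eq_empty] using hneg
        exact ⟨b, hbE, hba⟩
      · simp only at hhead hpos; subst hhead
        have hb : ∀ c, ¬ att c b := by
          intro c hc
          have : c ∈ ({c | att c b} : Set A) := hc
          rw [hpos] at this
          exact this
        have hbE : b ∈ Mᶜ := h.2 b (fun c hc => absurd hc (hb c))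
        exact ⟨b, hbE, hba⟩
    · exact Or.inl hx
  · rintro (hx | ⟨b, hbE, hbx⟩)
    · exact Or.inr hx
    · left
      refine ⟨⟨x, ∅, ∅⟩, ⟨⟨x, ∅, {b}⟩, Or.inl ⟨x, b, hbx, rfl⟩, ?_, rfl⟩, rfl, rfl, rfl⟩
      simpa [Set.singleton_inter_eq_empty] using hbE

end Aux

theorem stmt0 {A : Type*} [Finite A] (att : A → A → Prop) (M : Set A) :
    glSupportedModel att M ↔ semiStableExt att Mᶜ := by
  constructor
  · rintro ⟨hs, hmax⟩
    have hcM := (r1 att M).mp hs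
    refine ⟨hcM, ?_⟩
    intro T hT hsub
    have hNs : supportedModel Tᶜ (piAF att) := (r1 att Tᶜ).mpr (by rwa [compl_compl])
    have h1 : scSet (piAF att) M = rangeOf att Mᶜ := sc_eq att M hcM
    have h2 : scSet (piAF att) Tᶜ = rangeOf att T := by
      have := sc_eq att Tᶜ (by rwa [compl_compl])
      rwa [compl_compl] at this
    have := hmax Tᶜ hNs (by rw [h1, h2]; exact hsub)
    rwa [h1, h2] at this
  · rintro ⟨hcM, hmax⟩
    have hs : supportedModel M (piAF att) := (r1 att M).mpr hcM
    refine ⟨hs, ?_⟩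
    intro N hN hsub
    have hcN := (r1 att N).mp hN
    have h1 : scSet (piAF att) M = rangeOf att Mᶜ := sc_eq att M hcM
    have h2 : scSet (piAF att) N = rangeOf att Nᶜ := sc_eq att N hcN
    have := hmax Nᶜ hcN (by rw [← h1, ← h2]; exact hsub)
    rwa [h1, h2]
end

section
/- Let AF = ⟨AR, attacks⟩ be a finite argumentation framework. Then M is a GL-stage model of Π_AF⁻ if and only if E'_M = {x | def(x) ∈ L_{Π_AF⁻} \ M} is a stage extension of AF. -/
lemma model_iff_cf {A : Type*} (att : A → A → Prop) (M : Set A) :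
    isModel M (piMinus att) ↔ conflictFree att Mᶜ := by
  constructor
  · intro h a ha b hb hab
    have := h ⟨b, ∅, {a}⟩ ⟨b, a, hab, rfl⟩
    simp only [satClause] at this
    exact hb (this ⟨by simp, by ext x; simp; rintro rfl; exact ha⟩)
  · rintro h C ⟨a, b, hab, rfl⟩
    intro ⟨_, hneg⟩
    by_contra ha
    have hb : b ∉ M := by
      intro hb
      have : b ∈ ({b} : Set A) ∩ M := ⟨rfl, hb⟩
      rw [hneg] at this; exact this
    exact h b hb a ha hab

lemma scSet_eq {A : Type*} (att : A → A → Prop) (M : Set A) :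
    scSet (piMinus att) M = rangeOf att Mᶜ := by
  have hf : facts (glReduct (piMinus att) M) = plusSet att Mᶜ := by
    ext x
    constructor
    · rintro ⟨C', ⟨C, ⟨a, b, hab, rfl⟩, hneg, rfl⟩, hh, _, _⟩
      simp only at hh
      subst hh
      refine ⟨b, ?_, hab⟩
      intro hb
      have : b ∈ ({b} : Set A) ∩ M := ⟨rfl, hb⟩
      rw [hneg] at this; exact this
    · rintro ⟨b, hb, hab⟩
      refine ⟨⟨x, ∅, ∅⟩, ⟨⟨x, ∅, {b}⟩, ⟨x, b, hab, rfl⟩, ?_, rfl⟩, rfl, rfl, rfl⟩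
      ext y; simp; rintro rfl; exact hb
  rw [scSet, hf, rangeOf, Set.union_comm]

theorem stmt1 {A : Type*} [Finite A] (att : A → A → Prop) (M : Set A) :
    glStageModel att M ↔ stageExt att Mᶜ := by
  constructor
  · rintro ⟨hM, hmax⟩
    refine ⟨(model_iff_cf att M).mp hM, ?_⟩
    intro T hT hsub
    have hN : isModel Tᶜ (piMinus att) := by
      rw [model_iff_cf, compl_compl]; exact hT
    have := hmax Tᶜ hN (by rwa [scSet_eq, scSet_eq, compl_compl])
    rwa [scSet_eq, scSet_eq, compl_compl] at this
  · rintro ⟨hcf, hmax⟩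
    refine ⟨(model_iff_cf att M).mpr hcf, ?_⟩
    intro N hN hsub
    rw [scSet_eq, scSet_eq] at *
    exact hmax Nᶜ ((model_iff_cf att N).mp hN) hsub
end

section
/- Let AF be a finite argumentation framework. M ⊆ L_{Π_AF⁻} is a 2-valued model of Π_AF⁻ if and only if E'_M = {x | def(x) ∉ M} is a conflict-free set of AF. -/
theorem stmt3 {A : Type*} [Finite A] (att : A → A → Prop) (M : Set A) :
    isModel M (piMinus att) ↔ conflictFree att Mᶜ := by
  constructor
  · intro h b hb a ha hatt
    have := h ⟨a, ∅, {b}⟩ ⟨a, b, hatt, rfl⟩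
    exact ha (this ⟨by simp, by simpa using hb⟩)
  · rintro h C ⟨a, b, hatt, rfl⟩ ⟨-, hneg⟩
    by_contra ha
    have hb : b ∉ M := by
      intro hb
      have : b ∈ ({b} : Set A) ∩ M := ⟨rfl, hb⟩
      simp [hneg] at this
    exact h b hb a ha hatt
end

section
/- Let AF be a finite argumentation framework. M ⊆ L_{Π_AF} is a 2-valued model of Π_AF if and only if E_M = {x | def(x) ∉ M} is an admissible set of AF. -/
theorem stmt4 {A : Type*} [Finite A] (att : A → A → Prop) (M : Set A) :
    isModel M (piAF att) ↔ admissible att Mᶜ := by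
  constructor
  · intro h
    constructor
    · intro a ha b hb hab
      have hC : (⟨b, ∅, {a}⟩ : Clause A) ∈ piAF att :=
        Or.inl ⟨b, a, hab, rfl⟩
      have := h _ hC
      simp only [satClause] at this
      apply hb
      apply this
      refine ⟨Set.empty_subset _, ?_⟩
      ext x
      simp only [Set.mem_inter_iff, Set.mem_singleton_iff, Set.mem_empty_iff_false,
        iff_false, not_and]
      rintro rfl
      exact ha
    · intro a ha b hba
      have hC : (⟨a, {c | att c b}, ∅⟩ : Clause A) ∈ piAF att :=
        Or.inr ⟨a, b, hba, rfl⟩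
      have hs := h _ hC
      simp only [satClause] at hs
      by_contra hno
      push_neg at hno
      apply ha
      apply hs
      refine ⟨?_, Set.empty_inter _⟩
      intro c hc
      by_contra hcM
      exact hno c hcM hc
  · rintro ⟨cf, acc⟩ C hC
    rcases hC with ⟨a, b, hba, rfl⟩ | ⟨a, b, hba, rfl⟩
    · rintro ⟨-, hneg⟩
      by_contra haM
      have hbM : b ∉ M := by
        intro hb
        have : b ∈ ({b} : Set A) ∩ M := ⟨rfl, hb⟩
        rw [hneg] at this
        exact this
      exact cf b hbM a haM hba
    · rintro ⟨hpos, -⟩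
      by_contra haM
      obtain ⟨c, hc, hcb⟩ := acc a haM b hba
      exact hc (hpos hcb)
end

section
/- Let AF be a finite argumentation framework and E ⊆ AR. The following are equivalent: (a) E is a complete extension and E ∪ E⁺ is ⊆-maximal among sets F ∪ F⁺ with F a complete extension; (b) E is an admissible set and E ∪ E⁺ is ⊆-maximal among sets F ∪ F⁺ with F an admissible set. -/
section Proof5
variable {A : Type*}

lemma range_mono (att : A → A → Prop) {S T : Set A} (h : S ⊆ T) :
    rangeOf att S ⊆ rangeOf att T := by
  rintro x (hx | ⟨a, ha, hab⟩)
  · exact Or.inl (h hx)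
  · exact Or.inr ⟨a, h ha, hab⟩

/-- Dung's fundamental lemma: adding an acceptable argument preserves admissibility. -/
lemma admissible_insert (att : A → A → Prop) {S : Set A} (hS : admissible att S)
    {a : A} (ha : acceptable att S a) : admissible att (insert a S) := by
  obtain ⟨hcf, hacc⟩ := hS
  have key : ∀ b ∈ S, ¬ att b a := by
    intro b hb hba
    obtain ⟨c, hc, hcb⟩ := ha b hba
    exact hcf c hc b hb hcb
  constructor
  · rintro x (rfl | hx) y (rfl | hy)
    · intro haa
      obtain ⟨c, hc, hca⟩ := ha _ haa
      exact key c hc hca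
    · intro hay
      obtain ⟨c, hc, hcx⟩ := hacc y hy _ hay
      exact key c hc hcx
    · exact key x hx
    · exact hcf x hx y hy
  · rintro x (rfl | hx) b hbx
    · obtain ⟨c, hc, hcb⟩ := ha b hbx
      exact ⟨c, Or.inr hc, hcb⟩
    · obtain ⟨c, hc, hcb⟩ := hacc x hx b hbx
      exact ⟨c, Or.inr hc, hcb⟩

/-- In a finite framework, every admissible set extends to a complete extension. -/
lemma exists_complete_superset [Finite A] (att : A → A → Prop) {S : Set A}
    (hS : admissible att S) : ∃ T, completeExt att T ∧ S ⊆ T := by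
  obtain ⟨T, hST, hTmax⟩ := Finite.exists_le_maximal (p := admissible att) hS
  refine ⟨T, ⟨hTmax.1, ?_⟩, hST⟩
  intro a ha
  have := admissible_insert att hTmax.1 ha
  have h := hTmax.2 this (Set.subset_insert a T)
  exact h (Set.mem_insert a T)

theorem stmt5' [Finite A] (att : A → A → Prop) (E : Set A) :
    (completeExt att E ∧ ∀ T, completeExt att T →
        rangeOf att E ⊆ rangeOf att T → rangeOf att T ⊆ rangeOf att E) ↔
    (admissible att E ∧ ∀ T, admissible att T →
        rangeOf att E ⊆ rangeOf att T → rangeOf att T ⊆ rangeOf att E) := by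
  constructor
  · rintro ⟨hc, hmax⟩
    refine ⟨hc.1, fun T hT hsub => ?_⟩
    obtain ⟨T', hT', hTT'⟩ := exists_complete_superset att hT
    exact (range_mono att hTT').trans
      (hmax T' hT' (hsub.trans (range_mono att hTT')))
  · rintro ⟨ha, hmax⟩
    have hcomp : completeExt att E := by
      refine ⟨ha, fun a hacc => ?_⟩
      have hadm := admissible_insert att ha hacc
      have h := hmax _ hadm (range_mono att (Set.subset_insert a E))
      have : a ∈ rangeOf att E := h (Or.inl (Set.mem_insert a E))
      rcases this with h1 | ⟨b, hb, hba⟩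
      · exact h1
      · obtain ⟨c, hc, hcb⟩ := hacc b hba
        exact absurd hcb (ha.1 c hc b hb)
    exact ⟨hcomp, fun T hT => hmax T hT.1⟩

end Proof5

theorem stmt5 {A : Type*} [Finite A] (att : A → A → Prop) (E : Set A) :
    (completeExt att E ∧ ∀ T, completeExt att T →
        rangeOf att E ⊆ rangeOf att T → rangeOf att T ⊆ rangeOf att E) ↔
    (admissible att E ∧ ∀ T, admissible att T →
        rangeOf att E ⊆ rangeOf att T → rangeOf att T ⊆ rangeOf att E) := stmt5' att E
end

section
/- Let AF be a finite argumentation framework and E ⊆ AR. The following are equivalent: (a) E is a complete extension with ⊆-maximal range E ∪ E⁺ among complete extensions (i.e., E is semi-stable); (b) E is a preferred extension and E ∪ E⁺ is ⊆-maximal among ranges of preferred extensions. -/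
/-! By Zorn's lemma (unions of chains of admissible sets are admissible) every admissible set lies
in a preferred extension. A semi-stable extension `E` is preferred: any admissible `T ⊇ E` lies
in a preferred, hence complete, `P`, whose range contains that of `E` and so, by maximality,
equals it; an argument of `P` in `E⁺` would be attacked from `E ⊆ P`, so `P ⊆ E`. Since every
complete extension lies in a preferred one with larger range, maximality of the range among
complete extensions and among preferred extensions coincide. -/

section Extensions

variable {A : Type*} {att : A → A → Prop}

lemma acceptable.mono {S T : Set A} {a : A} (hST : S ⊆ T) (h : acceptable att S a) :
    acceptable att T a := fun b hb =>
  let ⟨c, hc, hcb⟩ := h b hb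
  ⟨c, hST hc, hcb⟩

lemma rangeOf_mono {S T : Set A} (h : S ⊆ T) : rangeOf att S ⊆ rangeOf att T := by
  rintro x (hx | ⟨a, ha, hax⟩)
  · exact Or.inl (h hx)
  · exact Or.inr ⟨a, h ha, hax⟩

/-- Dung's fundamental lemma. -/
lemma admissible.insert {S : Set A} {a : A} (hS : admissible att S) (ha : acceptable att S a) :
    admissible att (insert a S) := by
  obtain ⟨hcf, hacc⟩ := hS
  have not_att_a : ∀ b ∈ S, ¬ att b a := fun b hb hba =>
    let ⟨c, hc, hcb⟩ := ha b hba
    hcf c hc b hb hcb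
  refine ⟨?_, ?_⟩
  · rintro x (rfl | hx) y (rfl | hy) hxy
    · obtain ⟨c, hc, hca⟩ := ha _ hxy
      exact not_att_a c hc hca
    · obtain ⟨c, hc, hca⟩ := hacc y hy _ hxy
      exact not_att_a c hc hca
    · exact not_att_a x hx hxy
    · exact hcf x hx y hy hxy
  · rintro x (rfl | hx)
    · exact ha.mono (Set.subset_insert _ _)
    · exact (hacc x hx).mono (Set.subset_insert _ _)

lemma admissible.sUnion_of_isChain {c : Set (Set A)} (hc : IsChain (· ⊆ ·) c)
    (hadm : ∀ S ∈ c, admissible att S) : admissible att (⋃₀ c) := by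
  refine ⟨?_, ?_⟩
  · rintro a ⟨S, hS, haS⟩ b ⟨T, hT, hbT⟩
    rcases eq_or_ne S T with rfl | hne
    · exact (hadm S hS).1 a haS b hbT
    rcases hc hS hT hne with hST | hTS
    · exact (hadm T hT).1 a (hST haS) b hbT
    · exact (hadm S hS).1 a haS b (hTS hbT)
  · rintro a ⟨S, hS, haS⟩
    exact ((hadm S hS).2 a haS).mono (Set.subset_sUnion_of_mem hS)

lemma admissible.exists_preferredExt_superset {S : Set A} (hS : admissible att S) :
    ∃ P, preferredExt att P ∧ S ⊆ P := by
  obtain ⟨P, hSP, hP⟩ := zorn_subset_nonempty {T | admissible att T}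
    (fun c hcadm hc _ => ⟨⋃₀ c, admissible.sUnion_of_isChain hc hcadm,
      fun _ => Set.subset_sUnion_of_mem⟩) S hS
  exact ⟨P, ⟨hP.prop, fun T hT hPT => (hP.2 hT hPT).antisymm hPT⟩, hSP⟩

lemma preferredExt.completeExt {E : Set A} (h : preferredExt att E) : completeExt att E :=
  ⟨h.1, fun a ha =>
    h.2 (insert a E) (admissible.insert h.1 ha) (Set.subset_insert _ _) ▸ Set.mem_insert a E⟩

lemma completeExt.exists_preferredExt_rangeOf_subset {T : Set A} (hT : completeExt att T) :
    ∃ P, preferredExt att P ∧ rangeOf att T ⊆ rangeOf att P :=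
  let ⟨P, hP, hTP⟩ := admissible.exists_preferredExt_superset hT.1
  ⟨P, hP, rangeOf_mono hTP⟩

lemma subset_of_rangeOf_subset {E P : Set A} (hEP : E ⊆ P) (hP : conflictFree att P)
    (hrange : rangeOf att P ⊆ rangeOf att E) : P ⊆ E := fun x hx =>
  (hrange (Or.inl hx)).elim id fun ⟨a, ha, hax⟩ => (hP a (hEP ha) x hx hax).elim

lemma semiStableExt.preferredExt {E : Set A} (h : semiStableExt att E) : preferredExt att E := by
  refine ⟨h.1.1, fun T hT hET => ?_⟩
  obtain ⟨P, hP, hTP⟩ := hT.exists_preferredExt_superset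
  have hEP : E ⊆ P := hET.trans hTP
  have hrange : rangeOf att P ⊆ rangeOf att E := h.2 P hP.completeExt (rangeOf_mono hEP)
  exact (hTP.trans (subset_of_rangeOf_subset hEP hP.1.1 hrange)).antisymm hET

end Extensions

theorem stmt6_general {A : Type*} (att : A → A → Prop) (E : Set A) :
    semiStableExt att E ↔
    (preferredExt att E ∧ ∀ T, preferredExt att T →
        rangeOf att E ⊆ rangeOf att T → rangeOf att T ⊆ rangeOf att E) := by
  refine ⟨fun h => ⟨h.preferredExt, fun T hT => h.2 T hT.completeExt⟩, fun ⟨hE, hmax⟩ => ?_⟩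
  refine ⟨hE.completeExt, fun T hT hET => ?_⟩
  obtain ⟨P, hP, hTP⟩ := hT.exists_preferredExt_rangeOf_subset
  exact hTP.trans (hmax P hP (hET.trans hTP))

theorem stmt6 {A : Type*} [Finite A] (att : A → A → Prop) (E : Set A) :
    semiStableExt att E ↔
    (preferredExt att E ∧ ∀ T, preferredExt att T →
        rangeOf att E ⊆ rangeOf att T → rangeOf att T ⊆ rangeOf att E) :=
  stmt6_general att E
end

section
/- Let AF be a finite argumentation framework such that AF has at least one stable extension. Then the semi-stable extensions of AF coincide exactly with the stable extensions of AF. -/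
lemma stable_range_univ {A : Type*} (att : A → A → Prop) {S : Set A}
    (hS : stableExt att S) : rangeOf att S = Set.univ := by
  ext x
  simp only [rangeOf, Set.mem_union, Set.mem_univ, iff_true, plusSet, Set.mem_setOf_eq]
  by_cases hx : x ∈ S
  · exact Or.inl hx
  · exact Or.inr (hS.2 x hx)

lemma stable_complete {A : Type*} (att : A → A → Prop) {S : Set A}
    (hS : stableExt att S) : completeExt att S := by
  obtain ⟨hcf, hst⟩ := hS
  have hadm : admissible att S := by
    refine ⟨hcf, fun a ha b hb => ?_⟩
    have hbS : b ∉ S := fun hbS => hcf b hbS a ha hb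
    exact hst b hbS
  refine ⟨hadm, fun a hacc => ?_⟩
  by_contra haS
  obtain ⟨c, hcS, hca⟩ := hst a haS
  obtain ⟨d, hdS, hdc⟩ := hacc c hca
  exact hcf d hdS c hcS hdc

lemma range_stable_iff {A : Type*} (att : A → A → Prop) {S : Set A}
    (hcf : conflictFree att S) (hr : rangeOf att S = Set.univ) : stableExt att S := by
  refine ⟨hcf, fun b hb => ?_⟩
  have : b ∈ rangeOf att S := hr ▸ Set.mem_univ b
  rcases this with h | h
  · exact absurd h hb
  · exact h

theorem stmt9 {A : Type*} [Finite A] (att : A → A → Prop)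
    (h : ∃ S, stableExt att S) :
    ∀ E : Set A, semiStableExt att E ↔ stableExt att E := by
  obtain ⟨S, hS⟩ := h
  intro E
  constructor
  · rintro ⟨⟨⟨hcf, _⟩, _⟩, hmax⟩
    refine range_stable_iff att hcf ?_
    have h1 : rangeOf att E ⊆ rangeOf att S := by
      rw [stable_range_univ att hS]; exact Set.subset_univ _
    have h2 := hmax S (stable_complete att hS) h1
    rw [stable_range_univ att hS] at h2
    exact Set.univ_subset_iff.mp h2
  · intro hE
    refine ⟨stable_complete att hE, fun T _ _ => ?_⟩
    rw [stable_range_univ att hE]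
    exact Set.subset_univ _
end

section
/- Let AF be a finite argumentation framework such that AF has at least one stable extension. Then the stage extensions of AF coincide exactly with the stable extensions of AF. -/
theorem stmt10 {A : Type*} [Finite A] (att : A → A → Prop)
    (h : ∃ S, stableExt att S) :
    ∀ E : Set A, stageExt att E ↔ stableExt att E := by
  obtain ⟨S, hScf, hSst⟩ := h
  have hSrange : rangeOf att S = Set.univ := by
    ext b
    simp only [Set.mem_univ, iff_true, rangeOf, plusSet, Set.mem_union, Set.mem_setOf_eq]
    by_cases hb : b ∈ S
    · exact Or.inl hb
    · exact Or.inr (hSst b hb)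
  intro E
  constructor
  · rintro ⟨hEcf, hEmax⟩
    refine ⟨hEcf, fun b hb => ?_⟩
    have h1 : rangeOf att S ⊆ rangeOf att E :=
      hEmax S hScf (by rw [hSrange]; exact Set.subset_univ _)
    have hbE : b ∈ rangeOf att E := h1 (by rw [hSrange]; trivial)
    rcases hbE with h | h
    · exact absurd h hb
    · exact h
  · rintro ⟨hEcf, hEst⟩
    refine ⟨hEcf, fun T _ _ => ?_⟩
    intro b _
    by_cases hb : b ∈ E
    · exact Or.inl hb
    · exact Or.inr (hEst b hb)
end
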